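/- arXiv:1306.6599 — 5 statements merged into one kernel-verified Lean document; each statement's English description precedes it below -/
import Mathlib

section
/- Let m ≥ 3, ω = exp(2πi/m), and 1 ≤ ℓ ≤ m−1. Then for complex z, z̄ with z ≠ z̄ω^j for all j and z^m ≠ z̄^m, ∑_{j=0}^{m-1} ((z + z̄ω^j)/(z − z̄ω^j))·ω^{jℓ} = 2m·z^ℓ·z̄^{m−ℓ}/(z^m − z̄^m). -/
/-!
For `w = z̄ ωʲ` we have `(z + w) / (z - w) = 2 z (∑ᵢ zⁱ wᵐ⁻¹⁻ⁱ) / (zᵐ - wᵐ) - 1`, and `wᵐ = z̄ᵐ` does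
not depend on `j`. Summing against `ω^(jℓ)`, orthogonality of the powers of `ω` kills the constant
`-1` (as `m ∤ ℓ`) and every term of the geometric sum except `i = ℓ - 1`, which contributes
`m z^(ℓ-1) z̄^(m-ℓ)`.
-/

open Finset

namespace IsPrimitiveRoot

variable {R : Type*} [CommRing R] [IsDomain R] {ζ : R} {m : ℕ}

theorem sum_pow_mul_eq_ite (hζ : IsPrimitiveRoot ζ m) (r : ℕ) :
    ∑ j ∈ range m, ζ ^ (j * r) = if m ∣ r then (m : R) else 0 := by
  simp_rw [mul_comm _ r, pow_mul]
  split_ifs with hr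
  · simp [(hζ.pow_eq_one_iff_dvd r).mpr hr]
  · have hne : ζ ^ r ≠ 1 := mt (hζ.pow_eq_one_iff_dvd r).mp hr
    refine eq_zero_of_ne_zero_of_mul_left_eq_zero (sub_ne_zero_of_ne hne.symm) ?_
    rw [mul_neg_geom_sum, ← pow_mul, mul_comm, pow_mul, hζ.pow_eq_one, one_pow, sub_self]

theorem sum_geom_sum₂_mul_pow (hζ : IsPrimitiveRoot ζ m) (x y : R) {k : ℕ} (hk : k + 1 < m) :
    ∑ j ∈ range m, (∑ i ∈ range m, x ^ i * (y * ζ ^ j) ^ (m - 1 - i)) * ζ ^ (j * (k + 1))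
      = m * (x ^ k * y ^ (m - 1 - k)) := by
  have hdvd : ∀ i < m, m ∣ m - 1 - i + (k + 1) ↔ i = k := fun i hi ↦ by
    refine ⟨fun h ↦ ?_, fun h ↦ ⟨1, by omega⟩⟩
    have := Nat.eq_of_dvd_of_lt_two_mul (by omega) h (by omega)
    omega
  calc ∑ j ∈ range m, (∑ i ∈ range m, x ^ i * (y * ζ ^ j) ^ (m - 1 - i)) * ζ ^ (j * (k + 1))
      = ∑ i ∈ range m,
          x ^ i * y ^ (m - 1 - i) * ∑ j ∈ range m, ζ ^ (j * (m - 1 - i + (k + 1))) := by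
        simp_rw [sum_mul, mul_sum]
        rw [sum_comm]
        refine sum_congr rfl fun i _ ↦ sum_congr rfl fun j _ ↦ ?_
        ring
    _ = ∑ i ∈ range m, if i = k then m * (x ^ k * y ^ (m - 1 - k)) else 0 := by
        refine sum_congr rfl fun i hi ↦ ?_
        rw [hζ.sum_pow_mul_eq_ite, if_congr (hdvd i (mem_range.mp hi)) rfl rfl]
        split_ifs with h
        · rw [h]; ring
        · rw [mul_zero]
    _ = m * (x ^ k * y ^ (m - 1 - k)) := by
        rw [sum_ite_eq', if_pos (mem_range.mpr (by omega))]

end IsPrimitiveRoot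

theorem add_div_sub_eq_geom_sum₂ {K : Type*} [Field K] {x y : K} (m : ℕ)
    (hxy : x - y ≠ 0) (hxym : x ^ m - y ^ m ≠ 0) :
    (x + y) / (x - y)
      = 2 * x * (∑ i ∈ range m, x ^ i * y ^ (m - 1 - i)) / (x ^ m - y ^ m) - 1 := by
  rw [← geom_sum₂_mul] at hxym ⊢
  have hS := left_ne_zero_of_mul hxym
  field_simp
  ring

theorem sum_dihedral_cotangent_type_general
    (m : ℕ)
    (ω : ℂ) (hω : ω = Complex.exp (2 * Real.pi * Complex.I / m))
    (ℓ : ℕ) (hl1 : 1 ≤ ℓ) (hl2 : ℓ ≤ m - 1)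
    (z zbar : ℂ)
    (hz : ∀ j < m, z - zbar * ω ^ j ≠ 0)
    (hzm : z ^ m - zbar ^ m ≠ 0) :
    ∑ j ∈ Finset.range m, (z + zbar * ω ^ j) / (z - zbar * ω ^ j) * ω ^ (j * ℓ)
      = 2 * m * z ^ ℓ * zbar ^ (m - ℓ) / (z ^ m - zbar ^ m) := by
  obtain ⟨k, rfl⟩ : ∃ k, ℓ = k + 1 := ⟨ℓ - 1, by omega⟩
  have hprim : IsPrimitiveRoot ω m := hω ▸ Complex.isPrimitiveRoot_exp m (by omega)
  have htwist_pow : ∀ j, (zbar * ω ^ j) ^ m = zbar ^ m := fun j ↦ by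
    rw [mul_pow, ← pow_mul, mul_comm j, pow_mul, hprim.pow_eq_one, one_pow, mul_one]
  have hndvd : ¬ m ∣ k + 1 := Nat.not_dvd_of_pos_of_lt (by omega) (by omega)
  calc ∑ j ∈ range m, (z + zbar * ω ^ j) / (z - zbar * ω ^ j) * ω ^ (j * (k + 1))
      = 2 * z / (z ^ m - zbar ^ m) * ∑ j ∈ range m,
            (∑ i ∈ range m, z ^ i * (zbar * ω ^ j) ^ (m - 1 - i)) * ω ^ (j * (k + 1))
          - ∑ j ∈ range m, ω ^ (j * (k + 1)) := by
        rw [mul_sum, ← sum_sub_distrib]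
        refine sum_congr rfl fun j hj ↦ ?_
        rw [add_div_sub_eq_geom_sum₂ m (hz j (mem_range.mp hj)) (by rwa [htwist_pow]), htwist_pow]
        ring
    _ = 2 * m * z ^ (k + 1) * zbar ^ (m - (k + 1)) / (z ^ m - zbar ^ m) := by
        rw [hprim.sum_geom_sum₂_mul_pow _ _ (by omega), hprim.sum_pow_mul_eq_ite, if_neg hndvd,
          show m - (k + 1) = m - 1 - k by omega]
        ring

theorem sum_dihedral_cotangent_type
    (m : ℕ) (hm : 3 ≤ m)
    (ω : ℂ) (hω : ω = Complex.exp (2 * Real.pi * Complex.I / m))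
    (ℓ : ℕ) (hl1 : 1 ≤ ℓ) (hl2 : ℓ ≤ m - 1)
    (z zbar : ℂ) (hzbar : zbar ≠ 0)
    (hz : ∀ j < m, z - zbar * ω ^ j ≠ 0)
    (hzm : z ^ m - zbar ^ m ≠ 0) :
    ∑ j ∈ Finset.range m, (z + zbar * ω ^ j) / (z - zbar * ω ^ j) * ω ^ (j * ℓ)
      = 2 * m * z ^ ℓ * zbar ^ (m - ℓ) / (z ^ m - zbar ^ m) :=
  sum_dihedral_cotangent_type_general m ω hω ℓ hl1 hl2 z zbar hz hzm
end

section
/- For real parameters κ and δ, define H(κ,δ) = Γ(1/2+κ)²/(Γ(1/2+κ+δ)·Γ(1/2+κ−δ)). Then H(κ,δ)·H(−κ,δ) + (sin(πδ)/cos(πκ))² = 1, provided −1/2 < κ < 1/2 and |δ| < 1/2 (so all Gamma arguments avoid nonpositive integers and cos(πκ) ≠ 0). -/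
/-! Euler's reflection formula at `1/2 + x` reads `Γ(1/2 + x) Γ(1/2 - x) = π / cos (π x)`.
Regrouping the four Gamma factors in the denominator of `H(κ, δ) H(-κ, δ)` into two reflection
pairs (arguments `κ + δ` and `κ - δ`) gives
`H(κ, δ) H(-κ, δ) = cos (π(κ + δ)) cos (π(κ - δ)) / cos² (π κ)`,
and `cos (a + b) cos (a - b) = cos² a - sin² b` finishes the proof. -/

open Real

theorem Real.Gamma_one_half_add_mul_Gamma_one_half_sub (x : ℝ) :
    Gamma (1/2 + x) * Gamma (1/2 - x) = π / cos (π * x) := by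
  rw [show 1/2 - x = 1 - (1/2 + x) by ring, Gamma_mul_Gamma_one_sub,
    show π * (1/2 + x) = π * x + π / 2 by ring, sin_add_pi_div_two]

theorem Real.cos_add_mul_cos_sub (a b : ℝ) :
    cos (a + b) * cos (a - b) = cos a ^ 2 - sin b ^ 2 := by
  rw [cos_add, cos_sub]
  linear_combination cos a ^ 2 * sin_sq_add_cos_sq b - sin b ^ 2 * sin_sq_add_cos_sq a

/-- No case split is needed at the poles: there `Gamma` and `cos` both vanish, and the junk
values `π / 0 = 0`, `0⁻¹ = 0` keep the identity true. -/
theorem Real.Gamma_sq_div_mul_Gamma_sq_div (k d : ℝ) :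
    Gamma (1/2 + k) ^ 2 / (Gamma (1/2 + k + d) * Gamma (1/2 + k - d)) *
        (Gamma (1/2 - k) ^ 2 / (Gamma (1/2 - k + d) * Gamma (1/2 - k - d))) =
      cos (π * (k + d)) * cos (π * (k - d)) / cos (π * k) ^ 2 := by
  have pair (x u v : ℝ) (hu : u = 1/2 + x) (hv : v = 1/2 - x) :
      Gamma u * Gamma v = π / cos (π * x) := by
    subst hu hv; exact Gamma_one_half_add_mul_Gamma_one_half_sub x
  calc _ = (Gamma (1/2 + k) * Gamma (1/2 - k)) ^ 2 /
        ((Gamma (1/2 + k + d) * Gamma (1/2 - k - d)) *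
          (Gamma (1/2 + k - d) * Gamma (1/2 - k + d))) := by
        rw [div_mul_div_comm]; ring
    _ = (π / cos (π * k)) ^ 2 / ((π / cos (π * (k + d))) * (π / cos (π * (k - d)))) := by
        rw [pair k _ _ rfl rfl, pair (k + d) _ _ (by ring) (by ring),
          pair (k - d) _ _ (by ring) (by ring)]
    _ = _ := by
        have hπ : π ≠ 0 := pi_ne_zero
        simp only [div_eq_mul_inv, mul_inv, inv_inv, mul_pow]
        field_simp

theorem H_product_identity_general
    (kappa delta : ℝ)
    (hk : -(1/2) < kappa) (hk' : kappa < 1/2)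
    (H : ℝ → ℝ → ℝ)
    (hH : ∀ k d : ℝ, H k d = Real.Gamma (1/2 + k) ^ 2
        / (Real.Gamma (1/2 + k + d) * Real.Gamma (1/2 + k - d))) :
    H kappa delta * H (-kappa) delta
      + (Real.sin (Real.pi * delta) / Real.cos (Real.pi * kappa)) ^ 2 = 1 := by
  have hcos : cos (π * kappa) ≠ 0 :=
    (cos_pos_of_mem_Ioo ⟨by nlinarith [pi_pos], by nlinarith [pi_pos]⟩).ne'
  rw [hH, hH, ← sub_eq_add_neg, Gamma_sq_div_mul_Gamma_sq_div, mul_add, mul_sub,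
    cos_add_mul_cos_sub, div_pow, ← add_div, sub_add_cancel, div_self (pow_ne_zero 2 hcos)]

theorem H_product_identity
    (kappa delta : ℝ)
    (hk : -(1/2) < kappa) (hk' : kappa < 1/2)
    (hd : -(1/2) < delta) (hd' : delta < 1/2)
    (H : ℝ → ℝ → ℝ)
    (hH : ∀ k d : ℝ, H k d = Real.Gamma (1/2 + k) ^ 2
        / (Real.Gamma (1/2 + k + d) * Real.Gamma (1/2 + k - d))) :
    H kappa delta * H (-kappa) delta
      + (Real.sin (Real.pi * delta) / Real.cos (Real.pi * kappa)) ^ 2 = 1 :=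
  H_product_identity_general kappa delta hk hk' H hH
end

section
/- For real κ, δ with −1/2 < κ < 1/2 and 0 < δ < 1/2, and with H(κ,δ) = Γ(1/2+κ)²/(Γ(1/2+κ+δ)Γ(1/2+κ−δ)), the following trigonometric identity holds: H(κ,δ)·H(−κ,δ) = cos(π(κ+δ))·cos(π(κ−δ))/cos²(πκ). -/
/-! The product regroups into three pairs `Γ(1/2 + x) Γ(1/2 - x)`, with `x = κ, κ + δ, κ - δ`;
by the reflection formula each pair is `π / cos (π x)`, and the factors of `π` cancel. -/

open Real

-- Holds for all `a b c` because every zero denominator makes both sides `0`.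
theorem div_sq_div_div_mul_div {K : Type*} [Field K] {p : K} (hp : p ≠ 0) (a b c : K) :
    (p / c) ^ 2 / (p / a * (p / b)) = a * b / c ^ 2 := by
  simp only [div_eq_mul_inv, mul_inv, inv_inv, mul_pow, inv_pow]
  field_simp

theorem H_product_trig_general
    (kappa delta : ℝ)
    (H : ℝ → ℝ → ℝ)
    (hH : ∀ k d : ℝ, H k d = Real.Gamma (1/2 + k) ^ 2
        / (Real.Gamma (1/2 + k + d) * Real.Gamma (1/2 + k - d))) :
    H kappa delta * H (-kappa) delta
      = Real.cos (Real.pi * (kappa + delta)) * Real.cos (Real.pi * (kappa - delta))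
        / Real.cos (Real.pi * kappa) ^ 2 := by
  have hgroup : H kappa delta * H (-kappa) delta
      = (Gamma (1/2 + kappa) * Gamma (1/2 - kappa)) ^ 2
        / ((Gamma (1/2 + (kappa + delta)) * Gamma (1/2 - (kappa + delta)))
          * (Gamma (1/2 + (kappa - delta)) * Gamma (1/2 - (kappa - delta)))) := by
    rw [hH, hH]
    ring_nf
  rw [hgroup]
  simp only [Gamma_one_half_add_mul_Gamma_one_half_sub]
  exact div_sq_div_div_mul_div pi_ne_zero _ _ _

theorem H_product_trig
    (kappa delta : ℝ)
    (hk : -(1/2) < kappa) (hk' : kappa < 1/2)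
    (hd : 0 < delta) (hd' : delta < 1/2)
    (H : ℝ → ℝ → ℝ)
    (hH : ∀ k d : ℝ, H k d = Real.Gamma (1/2 + k) ^ 2
        / (Real.Gamma (1/2 + k + d) * Real.Gamma (1/2 + k - d))) :
    H kappa delta * H (-kappa) delta
      = Real.cos (Real.pi * (kappa + delta)) * Real.cos (Real.pi * (kappa - delta))
        / Real.cos (Real.pi * kappa) ^ 2 :=
  H_product_trig_general kappa delta H hH
end

section
/- For real κ with −1/2 < κ < 1/2 and real δ with 0 ≤ δ < 1/2, ∫_0^1 v^{κ} (1−v)^{−κ} ₂F₁(δ,−δ;1/2+κ;v) · ₂F₁(δ,−δ;1/2−κ;1−v) · (v(1−v))^{−1/2} dv = Γ(1/2+κ)Γ(1/2−κ) · ∑_{i,j≥0} (δ)_i(−δ)_i(δ)_j(−δ)_j / (i! j! (i+j)!). -/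
/-!
With `a = 1/2 + κ` and `b = 1/2 - κ` we have `a + b = 1`, and the integrand is
`v^(a-1) (1-v)^(b-1) ₂F₁(δ,-δ;a;v) ₂F₁(δ,-δ;b;1-v)`. Multiplying out the two series and
integrating term by term produces the Beta integrals
`B(a+i, b+j) = Γ(a) Γ(b) (a)_i (b)_j / (i+j)!`, whose Pochhammer factors cancel the denominators
of the series coefficients. Term-by-term integration is legitimate because
`|(δ)ₙ (-δ)ₙ| ≤ ((n-1)!)²` for `|δ| ≤ 1`, so the resulting double series converges absolutely.
-/

open MeasureTheory Set Real
open scoped Nat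

noncomputable section

def pochhammerPair (δ : ℝ) (n : ℕ) : ℝ :=
  (ascPochhammer ℝ n).eval δ * (ascPochhammer ℝ n).eval (-δ)

def hypCoeff (δ c : ℝ) (n : ℕ) : ℝ :=
  pochhammerPair δ n / ((ascPochhammer ℝ n).eval c * n !)

/-- `₂F₁(δ, -δ; c; w)`, as a bare power series. -/
def hyp2F1 (δ c w : ℝ) : ℝ :=
  ∑' n : ℕ, hypCoeff δ c n * w ^ n

end

theorem Real.Gamma_add_nat_eq_mul_ascPochhammer {x : ℝ} (hx : 0 < x) (n : ℕ) :
    Gamma (x + n) = Gamma x * (ascPochhammer ℝ n).eval x := by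
  induction n with
  | zero => simp
  | succ n ih =>
    rw [Nat.cast_succ, ← add_assoc, Gamma_add_one (by positivity), ih, ascPochhammer_succ_eval]
    ring

lemma ofReal_cpow_mul_one_sub_cpow {s t x : ℝ} (hx : x ∈ Icc (0 : ℝ) 1) :
    (x : ℂ) ^ ((s : ℂ) - 1) * (1 - (x : ℂ)) ^ ((t : ℂ) - 1)
      = ((x ^ (s - 1) * (1 - x) ^ (t - 1) : ℝ) : ℂ) := by
  rw [Complex.ofReal_mul, Complex.ofReal_cpow hx.1, Complex.ofReal_cpow (sub_nonneg.mpr hx.2)]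
  push_cast
  ring

lemma integral_Ioo_rpow_mul_one_sub_rpow {s t : ℝ} (hs : 0 < s) (ht : 0 < t) :
    ∫ v in Ioo (0 : ℝ) 1, v ^ (s - 1) * (1 - v) ^ (t - 1)
      = Gamma s * Gamma t / Gamma (s + t) := by
  have hbeta : Complex.betaIntegral s t
      = ((∫ v in Ioo (0 : ℝ) 1, v ^ (s - 1) * (1 - v) ^ (t - 1) : ℝ) : ℂ) := by
    rw [Complex.betaIntegral, ← integral_Ioc_eq_integral_Ioo,
      ← intervalIntegral.integral_of_le zero_le_one, ← intervalIntegral.integral_ofReal]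
    refine intervalIntegral.integral_congr fun x hx => ?_
    rw [uIcc_of_le zero_le_one] at hx
    exact ofReal_cpow_mul_one_sub_cpow hx
  have h := Complex.betaIntegral_eq_Gamma_mul_div s t (by simpa) (by simpa)
  rw [hbeta, ← Complex.ofReal_add, Complex.Gamma_ofReal, Complex.Gamma_ofReal,
    Complex.Gamma_ofReal] at h
  exact_mod_cast h

lemma abs_pochhammerPair_succ_le {δ : ℝ} (hδ : |δ| ≤ 1) (n : ℕ) :
    |pochhammerPair δ (n + 1)| ≤ (n ! : ℝ) ^ 2 := by
  obtain ⟨hδl, hδr⟩ := abs_le.mp hδ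
  induction n with
  | zero =>
    simp only [pochhammerPair, zero_add, ascPochhammer_one, Polynomial.eval_X, Nat.factorial_zero,
      Nat.cast_one, one_pow, abs_le]
    constructor <;> nlinarith
  | succ n ih =>
    have hstep : |(δ + (n + 1)) * (-δ + (n + 1))| ≤ ((n : ℝ) + 1) ^ 2 := by
      have : (0 : ℝ) ≤ n := n.cast_nonneg
      rw [abs_le]
      constructor <;> nlinarith [sq_nonneg δ]
    calc |pochhammerPair δ (n + 1 + 1)|
        = |pochhammerPair δ (n + 1)| * |(δ + (n + 1)) * (-δ + (n + 1))| := by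
          rw [← abs_mul]
          simp only [pochhammerPair, ascPochhammer_succ_eval (n + 1)]
          push_cast
          ring_nf
      _ ≤ (n ! : ℝ) ^ 2 * ((n : ℝ) + 1) ^ 2 := by gcongr
      _ = ((n + 1)! : ℝ) ^ 2 := by push_cast [Nat.factorial_succ]; ring

lemma mul_factorial_le_ascPochhammer_succ_eval {c : ℝ} (hc : 0 < c) (n : ℕ) :
    c * n ! ≤ (ascPochhammer ℝ (n + 1)).eval c := by
  induction n with
  | zero => simp
  | succ n ih =>
    have hpos := ascPochhammer_pos (n + 1) c hc
    rw [ascPochhammer_succ_eval (n + 1), Nat.factorial_succ, Nat.cast_mul, mul_comm _ (n ! : ℝ),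
      ← mul_assoc]
    gcongr
    linarith

lemma abs_hypCoeff_succ_le {δ c : ℝ} (hδ : |δ| ≤ 1) (hc : 0 < c) (n : ℕ) :
    |hypCoeff δ c (n + 1)| ≤ c⁻¹ := by
  have hpos : 0 < (ascPochhammer ℝ (n + 1)).eval c * ((n + 1)! : ℝ) :=
    mul_pos (ascPochhammer_pos _ _ hc) (by positivity)
  have hfac : (n ! : ℝ) ≤ (n + 1)! := by exact_mod_cast Nat.factorial_le n.le_succ
  rw [hypCoeff, abs_div, abs_of_pos hpos, div_le_iff₀ hpos]
  calc |pochhammerPair δ (n + 1)|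
      ≤ (n ! : ℝ) ^ 2 := abs_pochhammerPair_succ_le hδ n
    _ ≤ c⁻¹ * (c * n ! * (n + 1)!) := by
      rw [mul_assoc, inv_mul_cancel_left₀ hc.ne', sq]
      gcongr
    _ ≤ c⁻¹ * ((ascPochhammer ℝ (n + 1)).eval c * (n + 1)!) := by
      have := mul_factorial_le_ascPochhammer_succ_eval hc n
      gcongr

lemma summable_norm_hypCoeff_mul_pow {δ c w : ℝ} (hδ : |δ| ≤ 1) (hc : 0 < c) (hw : ‖w‖ < 1) :
    Summable fun n => ‖hypCoeff δ c n * w ^ n‖ := by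
  rw [← summable_nat_add_iff 1]
  refine Summable.of_nonneg_of_le (fun _ => norm_nonneg _) (fun n => ?_)
    ((summable_geometric_of_lt_one (norm_nonneg w) hw).mul_left c⁻¹)
  rw [norm_mul, norm_pow]
  exact mul_le_mul (abs_hypCoeff_succ_le hδ hc n)
    (pow_le_pow_of_le_one (norm_nonneg w) hw.le n.le_succ) (by positivity) (by positivity)

lemma summable_abs_pochhammerPair_div_factorial_sq {δ : ℝ} (hδ : |δ| ≤ 1) :
    Summable fun n => |pochhammerPair δ n| / (n ! : ℝ) ^ 2 := by
  rw [← summable_nat_add_iff 1]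
  refine Summable.of_nonneg_of_le (fun _ => by positivity) (fun n => ?_)
    ((summable_nat_add_iff 1).mpr (summable_one_div_nat_pow.mpr one_lt_two))
  rw [div_le_div_iff₀ (by positivity) (by positivity), one_mul]
  calc |pochhammerPair δ (n + 1)| * ((n + 1 : ℕ) : ℝ) ^ 2
      ≤ (n ! : ℝ) ^ 2 * ((n + 1 : ℕ) : ℝ) ^ 2 := by gcongr; exact abs_pochhammerPair_succ_le hδ n
    _ = ((n + 1)! : ℝ) ^ 2 := by push_cast [Nat.factorial_succ]; ring

lemma summable_abs_pochhammerPair_mul_div_factorial {δ : ℝ} (hδ : |δ| ≤ 1) :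
    Summable fun p : ℕ × ℕ => |pochhammerPair δ p.1| * |pochhammerPair δ p.2|
      / (p.1 ! * p.2 ! * (p.1 + p.2)! : ℝ) := by
  have hu := summable_abs_pochhammerPair_div_factorial_sq hδ
  refine Summable.of_nonneg_of_le (fun _ => by positivity) (fun p => ?_)
    (hu.mul_of_nonneg hu (fun _ => by positivity) (fun _ => by positivity))
  have hfac : (p.1 ! * p.2 ! : ℝ) ≤ (p.1 + p.2)! := by
    exact_mod_cast Nat.le_of_dvd (Nat.factorial_pos _)
      (Nat.factorial_mul_factorial_dvd_factorial_add _ _)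
  calc _ ≤ |pochhammerPair δ p.1| * |pochhammerPair δ p.2| / (p.1 ! * p.2 ! * (p.1 ! * p.2 !) : ℝ) := by
        gcongr
    _ = _ := by ring

lemma integral_Ioo_rpow_add_nat_mul_one_sub_rpow_add_nat {a b : ℝ} (ha : 0 < a) (hb : 0 < b)
    (hab : a + b = 1) (i j : ℕ) :
    ∫ v in Ioo (0 : ℝ) 1, v ^ (a + i - 1) * (1 - v) ^ (b + j - 1)
      = Gamma a * Gamma b
        * ((ascPochhammer ℝ i).eval a * (ascPochhammer ℝ j).eval b / (i + j)!) := by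
  rw [integral_Ioo_rpow_mul_one_sub_rpow (by positivity) (by positivity),
    show a + i + (b + j) = ((i + j : ℕ) : ℝ) + 1 by push_cast; linarith,
    Gamma_nat_eq_factorial, Gamma_add_nat_eq_mul_ascPochhammer ha,
    Gamma_add_nat_eq_mul_ascPochhammer hb]
  ring

lemma integral_Ioo_tsum_mul_rpow_mul_one_sub_rpow {a b : ℝ} (ha : 0 < a) (hb : 0 < b)
    (hab : a + b = 1) (c : ℕ × ℕ → ℝ)
    (hc : Summable fun p : ℕ × ℕ =>
      |c p| * ((ascPochhammer ℝ p.1).eval a * (ascPochhammer ℝ p.2).eval b / (p.1 + p.2)!)) :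
    ∫ v in Ioo (0 : ℝ) 1, ∑' p : ℕ × ℕ, c p * (v ^ (a + p.1 - 1) * (1 - v) ^ (b + p.2 - 1))
      = Gamma a * Gamma b * ∑' p : ℕ × ℕ,
          c p * ((ascPochhammer ℝ p.1).eval a * (ascPochhammer ℝ p.2).eval b / (p.1 + p.2)!) := by
  set kernel : ℕ × ℕ → ℝ → ℝ := fun p v => v ^ (a + p.1 - 1) * (1 - v) ^ (b + p.2 - 1)
  have hkernel (p : ℕ × ℕ) := integral_Ioo_rpow_add_nat_mul_one_sub_rpow_add_nat ha hb hab p.1 p.2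
  have hintegrable (p : ℕ × ℕ) : IntegrableOn (kernel p) (Ioo 0 1) := by
    -- a non-integrable function would have Bochner integral `0`, but the Beta integral is positive
    refine Integrable.of_integral_ne_zero (ne_of_gt ?_)
    rw [hkernel]
    have := ascPochhammer_pos p.1 a ha
    have := ascPochhammer_pos p.2 b hb
    have := Gamma_pos_of_pos ha
    have := Gamma_pos_of_pos hb
    positivity
  have hkernel_nonneg (p : ℕ × ℕ) {v : ℝ} (hv : v ∈ Ioo (0 : ℝ) 1) : 0 ≤ kernel p v :=
    mul_nonneg (rpow_nonneg hv.1.le _) (rpow_nonneg (sub_pos.mpr hv.2).le _)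
  have hnorm (p : ℕ × ℕ) : ∫ v in Ioo (0 : ℝ) 1, ‖c p * kernel p v‖
      = Gamma a * Gamma b
        * (|c p| * ((ascPochhammer ℝ p.1).eval a * (ascPochhammer ℝ p.2).eval b / (p.1 + p.2)!)) := by
    rw [setIntegral_congr_fun measurableSet_Ioo (g := fun v => |c p| * kernel p v) fun v hv => by
        rw [norm_mul, norm_of_nonneg (hkernel_nonneg p hv), norm_eq_abs],
      integral_const_mul, hkernel]
    ring
  rw [← integral_tsum_of_summable_integral_norm (fun p => (hintegrable p).const_mul (c p))
      ((hc.mul_left (Gamma a * Gamma b)).congr fun p => (hnorm p).symm),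
    ← tsum_mul_left]
  refine tsum_congr fun p => ?_
  rw [integral_const_mul, hkernel]
  ring

lemma rpow_mul_hyp2F1_mul_hyp2F1_eq_tsum {δ a b v : ℝ} (hδ : |δ| ≤ 1) (ha : 0 < a) (hb : 0 < b)
    (hv : v ∈ Ioo (0 : ℝ) 1) :
    v ^ (a - 1) * (1 - v) ^ (b - 1) * (hyp2F1 δ a v * hyp2F1 δ b (1 - v))
      = ∑' p : ℕ × ℕ, hypCoeff δ a p.1 * hypCoeff δ b p.2
          * (v ^ (a + p.1 - 1) * (1 - v) ^ (b + p.2 - 1)) := by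
  have hv0 : 0 < v := hv.1
  have hv1 : 0 < 1 - v := sub_pos.mpr hv.2
  rw [hyp2F1, hyp2F1,
    tsum_mul_tsum_of_summable_norm
      (summable_norm_hypCoeff_mul_pow hδ ha (by rw [norm_of_nonneg hv0.le]; exact hv.2))
      (summable_norm_hypCoeff_mul_pow hδ hb (by rw [norm_of_nonneg hv1.le]; linarith)),
    ← tsum_mul_left]
  refine tsum_congr fun p => ?_
  rw [add_sub_right_comm a, add_sub_right_comm b, rpow_add hv0, rpow_add hv1, rpow_natCast,
    rpow_natCast]
  ring

lemma hypCoeff_mul_hypCoeff_mul_ascPochhammer {δ a b : ℝ} (ha : 0 < a) (hb : 0 < b) (i j : ℕ) :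
    hypCoeff δ a i * hypCoeff δ b j
        * ((ascPochhammer ℝ i).eval a * (ascPochhammer ℝ j).eval b / (i + j)!)
      = pochhammerPair δ i * pochhammerPair δ j / (i ! * j ! * (i + j)! : ℝ) := by
  have := (ascPochhammer_pos i a ha).ne'
  have := (ascPochhammer_pos j b hb).ne'
  rw [hypCoeff, hypCoeff]
  field_simp

theorem integral_Ioo_rpow_mul_hyp2F1_mul_hyp2F1 {δ a b : ℝ} (hδ : |δ| ≤ 1) (ha : 0 < a)
    (hb : 0 < b) (hab : a + b = 1) :
    ∫ v in Ioo (0 : ℝ) 1, v ^ (a - 1) * (1 - v) ^ (b - 1) * (hyp2F1 δ a v * hyp2F1 δ b (1 - v))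
      = Gamma a * Gamma b * ∑' p : ℕ × ℕ,
          pochhammerPair δ p.1 * pochhammerPair δ p.2 / (p.1 ! * p.2 ! * (p.1 + p.2)! : ℝ) := by
  have hsummable : Summable fun p : ℕ × ℕ => |hypCoeff δ a p.1 * hypCoeff δ b p.2|
      * ((ascPochhammer ℝ p.1).eval a * (ascPochhammer ℝ p.2).eval b / (p.1 + p.2)!) :=
    (summable_abs_pochhammerPair_mul_div_factorial hδ).congr fun p => by
      have := ascPochhammer_pos p.1 a ha
      have := ascPochhammer_pos p.2 b hb
      rw [← abs_of_pos (by positivity :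
          0 < (ascPochhammer ℝ p.1).eval a * (ascPochhammer ℝ p.2).eval b / (p.1 + p.2)!),
        ← abs_mul (hypCoeff δ a p.1 * hypCoeff δ b p.2),
        hypCoeff_mul_hypCoeff_mul_ascPochhammer ha hb, abs_div, abs_mul,
        abs_of_pos (by positivity : (0 : ℝ) < p.1 ! * p.2 ! * (p.1 + p.2)!)]
  rw [setIntegral_congr_fun measurableSet_Ioo fun v hv =>
      rpow_mul_hyp2F1_mul_hyp2F1_eq_tsum hδ ha hb hv,
    integral_Ioo_tsum_mul_rpow_mul_one_sub_rpow ha hb hab _ hsummable]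
  simp_rw [hypCoeff_mul_hypCoeff_mul_ascPochhammer ha hb]

lemma rpow_mul_one_sub_rpow_neg_mul_rpow_neg_half {κ v : ℝ} (hv : v ∈ Ioo (0 : ℝ) 1) :
    v ^ κ * (1 - v) ^ (-κ) * (v * (1 - v)) ^ (-(1 : ℝ) / 2)
      = v ^ (1 / 2 + κ - 1) * (1 - v) ^ (1 / 2 - κ - 1) := by
  have hv1 : 0 < 1 - v := sub_pos.mpr hv.2
  rw [mul_rpow hv.1.le hv1.le, mul_mul_mul_comm, ← rpow_add hv.1, ← rpow_add hv1]
  ring_nf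

theorem integral_f1_product
    (kappa delta : ℝ)
    (hk : -(1/2) < kappa) (hk' : kappa < 1/2)
    (hd : 0 ≤ delta) (hd' : delta < 1/2) :
    ∫ v in (0:ℝ)..1,
        v ^ kappa * (1 - v) ^ (-kappa)
          * (∑' i : ℕ, (ascPochhammer ℝ i).eval delta
              * (ascPochhammer ℝ i).eval (-delta)
              / ((ascPochhammer ℝ i).eval (1/2 + kappa) * (Nat.factorial i)) * v ^ i)
          * (∑' j : ℕ, (ascPochhammer ℝ j).eval delta
              * (ascPochhammer ℝ j).eval (-delta)
              / ((ascPochhammer ℝ j).eval (1/2 - kappa) * (Nat.factorial j)) * (1 - v) ^ j)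
          * (v * (1 - v)) ^ (-(1:ℝ)/2)
      = Real.Gamma (1/2 + kappa) * Real.Gamma (1/2 - kappa)
        * ∑' p : ℕ × ℕ,
            (ascPochhammer ℝ p.1).eval delta * (ascPochhammer ℝ p.1).eval (-delta)
            * (ascPochhammer ℝ p.2).eval delta * (ascPochhammer ℝ p.2).eval (-delta)
            / ((Nat.factorial p.1) * (Nat.factorial p.2) * (Nat.factorial (p.1 + p.2))) := by
  have hδ : |delta| ≤ 1 := abs_le.mpr ⟨by linarith, by linarith⟩
  rw [intervalIntegral.integral_of_le zero_le_one, integral_Ioc_eq_integral_Ioo]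
  calc _ = ∫ v in Ioo (0 : ℝ) 1, v ^ (1 / 2 + kappa - 1) * (1 - v) ^ (1 / 2 - kappa - 1)
          * (hyp2F1 delta (1 / 2 + kappa) v * hyp2F1 delta (1 / 2 - kappa) (1 - v)) :=
        setIntegral_congr_fun measurableSet_Ioo fun v hv => by
          rw [← rpow_mul_one_sub_rpow_neg_mul_rpow_neg_half hv]
          simp only [hyp2F1, hypCoeff, pochhammerPair]
          ring
    _ = _ := by
      rw [integral_Ioo_rpow_mul_hyp2F1_mul_hyp2F1 hδ (by linarith) (by linarith) (by ring)]
      simp only [pochhammerPair, mul_assoc]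
end

section
/- For real δ with 0 < δ < 1/2, ∑_{i,j≥0} (δ)_i(−δ)_i(δ)_j(−δ)_j/(i! j! (i+j)!) = (1/π)·((π/2)cos(πδ) + (1/(2δ))sin(πδ)). -/
/-!
Since `∫₀^{π/2} sin^{2i} θ cos^{2j} θ dθ = (π/2) (1/2)_i (1/2)_j / (i+j)!`, the `(i, j)` term of
the double series is `2/π` times the integral of the `(i, j)` term of the product
`₂F₁(δ,-δ;1/2;sin² θ) ₂F₁(δ,-δ;1/2;cos² θ)`; summing and integrating may be interchanged because
`|(δ)_{k+1} (-δ)_{k+1}| ≤ δ² k!²`. By the hypergeometric differential equation,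
`f θ = ₂F₁(δ,-δ;1/2;sin² θ)` solves `f'' = -4δ² f`, `f 0 = 1`, `f' 0 = 0`, so `f θ = cos (2δθ)`,
and the integral of `cos (2δθ) cos (δπ - 2δθ)` over `[0, π/2]` is elementary.
-/

open Real Set MeasureTheory
open scoped Nat

lemma ascPochhammer_succ_eval_mul_eval_neg (δ : ℝ) (k : ℕ) :
    (ascPochhammer ℝ (k + 1)).eval δ * (ascPochhammer ℝ (k + 1)).eval (-δ) =
      (ascPochhammer ℝ k).eval δ * (ascPochhammer ℝ k).eval (-δ) * ((k : ℝ) ^ 2 - δ ^ 2) := by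
  simp only [ascPochhammer_succ_eval]
  ring

lemma abs_ascPochhammer_succ_eval_mul_eval_neg_le {δ : ℝ} (hδ : δ ^ 2 ≤ 2) (k : ℕ) :
    |(ascPochhammer ℝ (k + 1)).eval δ * (ascPochhammer ℝ (k + 1)).eval (-δ)| ≤
      δ ^ 2 * (k ! : ℝ) ^ 2 := by
  induction k with
  | zero => simp [← sq]
  | succ k ih =>
    have hfactor : |((k + 1 : ℕ) : ℝ) ^ 2 - δ ^ 2| ≤ ((k + 1 : ℕ) : ℝ) ^ 2 := by
      rw [abs_le]; push_cast; constructor <;> nlinarith [(k.cast_nonneg : (0 : ℝ) ≤ k)]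
    rw [ascPochhammer_succ_eval_mul_eval_neg, abs_mul, Nat.factorial_succ, Nat.cast_mul]
    calc _ ≤ δ ^ 2 * (k ! : ℝ) ^ 2 * ((k + 1 : ℕ) : ℝ) ^ 2 :=
          mul_le_mul ih hfactor (abs_nonneg _) (by positivity)
      _ = _ := by ring

lemma summable_abs_ascPochhammer_eval_mul_eval_neg_div_sq {δ : ℝ} (hδ : δ ^ 2 ≤ 2) :
    Summable fun k : ℕ =>
      |(ascPochhammer ℝ k).eval δ * (ascPochhammer ℝ k).eval (-δ)| / (k ! : ℝ) ^ 2 := by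
  rw [← summable_nat_add_iff 1]
  have hinvSq : Summable fun k : ℕ => δ ^ 2 / ((k + 1 : ℕ) : ℝ) ^ 2 :=
    ((summable_nat_add_iff 1).2 (summable_one_div_nat_pow.2 one_lt_two)).mul_left (δ ^ 2) |>.congr
      fun k => by ring
  refine hinvSq.of_nonneg_of_le (fun k => by positivity) fun k => ?_
  rw [Nat.factorial_succ, Nat.cast_mul, mul_pow, div_le_div_iff₀ (by positivity) (by positivity)]
  calc _ ≤ δ ^ 2 * (k ! : ℝ) ^ 2 * ((k + 1 : ℕ) : ℝ) ^ 2 := by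
        gcongr; exact abs_ascPochhammer_succ_eval_mul_eval_neg_le hδ k
    _ = _ := by ring

lemma ordinaryHypergeometricCoefficient_succ_mul {𝕂 : Type*} [Field 𝕂] [CharZero 𝕂]
    (a b c : 𝕂) (n : ℕ) (hc : c + n ≠ 0) :
    ordinaryHypergeometricCoefficient a b c (n + 1) * ((n + 1) * (c + n)) =
      ordinaryHypergeometricCoefficient a b c n * ((a + n) * (b + n)) := by
  simp only [ordinaryHypergeometricCoefficient, ascPochhammer_succ_eval, Nat.factorial_succ,
    Nat.cast_mul, Nat.cast_succ, mul_inv]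
  by_cases hp : (ascPochhammer 𝕂 n).eval c = 0
  · simp [hp]
  · have : (n + 1 : 𝕂) ≠ 0 := by exact_mod_cast n.succ_ne_zero
    field_simp

lemma abs_ordinaryHypergeometricCoefficient_le_one {δ : ℝ} (hδ : δ ^ 2 ≤ 1 / 2) (n : ℕ) :
    |ordinaryHypergeometricCoefficient δ (-δ) (1 / 2) n| ≤ 1 := by
  induction n with
  | zero => simp
  | succ n ih =>
    set c := ordinaryHypergeometricCoefficient δ (-δ) (1 / 2)
    have hrec : c (n + 1) * ((n + 1) * (1 / 2 + n)) = c n * ((δ + n) * (-δ + n)) :=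
      ordinaryHypergeometricCoefficient_succ_mul δ (-δ) (1 / 2) n (by positivity)
    have hpos : (0 : ℝ) < (n + 1) * (1 / 2 + n) := by positivity
    have hratio : |(δ + n) * (-δ + n)| ≤ (n + 1) * (1 / 2 + n) := by
      rw [abs_le]; constructor <;> nlinarith [(n.cast_nonneg : (0 : ℝ) ≤ n)]
    refine le_of_mul_le_mul_right ?_ hpos
    calc |c (n + 1)| * ((n + 1) * (1 / 2 + n)) = |c n| * |(δ + n) * (-δ + n)| := by
          rw [← abs_of_pos hpos, ← abs_mul, hrec, abs_mul]
      _ ≤ 1 * ((n + 1) * (1 / 2 + n)) := mul_le_mul ih hratio (abs_nonneg _) zero_le_one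

section PowerSeriesDeriv

noncomputable def powerSeriesDeriv (c : ℕ → ℝ) (n : ℕ) (u : ℝ) : ℝ :=
  ∑' k, c k * (k.descFactorial n * u ^ (k - n))

lemma powerSeriesDeriv_zero (c : ℕ → ℝ) (u : ℝ) :
    powerSeriesDeriv c 0 u = ∑' k, c k * u ^ k := by
  simp [powerSeriesDeriv]

lemma abs_descFactorial_mul_pow_le {r y : ℝ} (hr : 0 < r) (hy : |y| ≤ r) (n k : ℕ) :
    |k.descFactorial n * y ^ (k - n)| ≤ k ^ n * r ^ k / r ^ n := by
  rcases lt_or_ge k n with hkn | hnk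
  · simp [Nat.descFactorial_eq_zero_iff_lt.2 hkn]; positivity
  · rw [abs_mul, abs_pow, Nat.abs_cast, mul_div_assoc, div_eq_mul_inv, ← pow_sub₀ r hr.ne' hnk]
    gcongr
    exact_mod_cast Nat.descFactorial_le_pow k n

variable {c : ℕ → ℝ} {M : ℝ}

lemma norm_mul_descFactorial_mul_pow_le (hc : ∀ k, |c k| ≤ M) {r y : ℝ} (hr : 0 < r)
    (hy : |y| ≤ r) (n k : ℕ) :
    ‖c k * (k.descFactorial n * y ^ (k - n))‖ ≤ M / r ^ n * (k ^ n * r ^ k) := by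
  rw [Real.norm_eq_abs, abs_mul, div_mul_eq_mul_div, mul_div_assoc]
  exact mul_le_mul (hc k) (abs_descFactorial_mul_pow_le hr hy n k) (abs_nonneg _)
    ((abs_nonneg _).trans (hc k))

lemma summable_pow_mul_geometric {r : ℝ} (hr0 : 0 ≤ r) (hr1 : r < 1) (n : ℕ) (C : ℝ) :
    Summable fun k : ℕ => C * ((k : ℝ) ^ n * r ^ k) :=
  (summable_pow_mul_geometric_of_norm_lt_one n (by rwa [norm_of_nonneg hr0])).mul_left C

lemma summable_norm_mul_descFactorial_mul_pow (hc : ∀ k, |c k| ≤ M) {u : ℝ} (hu : |u| < 1)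
    (n : ℕ) : Summable fun k => ‖c k * (k.descFactorial n * u ^ (k - n))‖ := by
  obtain ⟨r, hur, hr1⟩ := exists_between hu
  have hr : 0 < r := (abs_nonneg u).trans_lt hur
  exact (summable_pow_mul_geometric hr.le hr1 n _).of_nonneg_of_le (fun _ => norm_nonneg _)
    (norm_mul_descFactorial_mul_pow_le hc hr hur.le n)

lemma hasDerivAt_powerSeriesDeriv (hc : ∀ k, |c k| ≤ M) {u : ℝ} (hu : |u| < 1) (n : ℕ) :
    HasDerivAt (powerSeriesDeriv c n) (powerSeriesDeriv c (n + 1) u) u := by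
  obtain ⟨r, hur, hr1⟩ := exists_between hu
  have hr : 0 < r := (abs_nonneg u).trans_lt hur
  have hball : ∀ y ∈ Ioo (-r) r, |y| ≤ r := fun y hy => abs_le.2 ⟨hy.1.le, hy.2.le⟩
  have hterm (k : ℕ) (y : ℝ) : HasDerivAt (fun x => c k * (k.descFactorial n * x ^ (k - n)))
      (c k * (k.descFactorial (n + 1) * y ^ (k - (n + 1)))) y := by
    refine (((hasDerivAt_pow (k - n) y).const_mul (k.descFactorial n : ℝ)).const_mul
      (c k)).congr_deriv ?_
    rw [Nat.descFactorial_succ, Nat.sub_sub, Nat.cast_mul]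
    ring
  exact hasDerivAt_tsum_of_isPreconnected (summable_pow_mul_geometric hr.le hr1 (n + 1) _)
    isOpen_Ioo (convex_Ioo _ _).isPreconnected (fun k y _ => hterm k y)
    (fun k y hy => norm_mul_descFactorial_mul_pow_le hc hr (hball y hy) (n + 1) k)
    (show (0 : ℝ) ∈ Ioo (-r) r from ⟨by linarith, hr⟩)
    (summable_norm_mul_descFactorial_mul_pow hc (by simp) n).of_norm
    ⟨by linarith [neg_abs_le u], (le_abs_self u).trans_lt hur⟩

lemma powerSeriesDeriv_hypergeometric_ode {a b γ : ℝ} (hc : ∀ k, |c k| ≤ M)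
    (hrec : ∀ k : ℕ, c (k + 1) * ((k + 1) * (γ + k)) = c k * ((a + k) * (b + k)))
    {u : ℝ} (hu : |u| < 1) :
    u * (1 - u) * powerSeriesDeriv c 2 u + (γ - (a + b + 1) * u) * powerSeriesDeriv c 1 u
      - a * b * powerSeriesDeriv c 0 u = 0 := by
  set T : ℕ → ℕ → ℝ := fun n k => c k * (k.descFactorial n * u ^ (k - n)) with hT
  have hsum (n : ℕ) : Summable (T n) := (summable_norm_mul_descFactorial_mul_pow hc hu n).of_norm
  -- the left-hand side is `∑ D - ∑ E`, and the recurrence says `D (k + 1) = E k`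
  set D : ℕ → ℝ := fun k => u * T 2 k + γ * T 1 k with hD
  set E : ℕ → ℝ := fun k => u ^ 2 * T 2 k + (a + b + 1) * u * T 1 k + a * b * T 0 k with hE
  have hDE (k : ℕ) : D (k + 1) = E k := by
    rcases k with _ | _ | m
    · simp only [hD, hE, hT, Nat.descFactorial_succ, Nat.descFactorial_zero, tsub_zero, tsub_self,
        Nat.cast_mul, Nat.cast_one, Nat.cast_zero, pow_zero, zero_mul, mul_zero, mul_one]
      linear_combination hrec 0
    · simp only [hD, hE, hT, Nat.descFactorial_succ, Nat.descFactorial_zero, tsub_zero, tsub_self,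
        Nat.cast_mul, Nat.cast_one, pow_zero, mul_one]
      linear_combination u * hrec 1
    · have h := hrec (m + 2)
      push_cast at h
      simp only [hD, hE, hT, Nat.descFactorial_succ, Nat.descFactorial_zero, tsub_zero,
        add_tsub_cancel_right, Nat.reduceSubDiff, Nat.cast_mul, Nat.cast_add, Nat.cast_one, mul_one]
      linear_combination u ^ (m + 2) * h
  have hsumD : Summable D := ((hsum 2).mul_left u).add ((hsum 1).mul_left γ)
  have hD0 : D 0 = 0 := by simp [hD, hT]
  have key : ∑' k, D k = ∑' k, E k := by
    rw [hsumD.tsum_eq_zero_add, hD0, zero_add]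
    exact tsum_congr hDE
  simp only [hD, hE] at key
  rw [(hsum 2).mul_left u |>.tsum_add ((hsum 1).mul_left γ), tsum_mul_left, tsum_mul_left,
    (((hsum 2).mul_left _).add ((hsum 1).mul_left _)).tsum_add ((hsum 0).mul_left _),
    ((hsum 2).mul_left _).tsum_add ((hsum 1).mul_left _), tsum_mul_left, tsum_mul_left,
    tsum_mul_left] at key
  simp only [powerSeriesDeriv]
  linear_combination key

end PowerSeriesDeriv

lemma eqOn_cos_of_hasDerivAt {f f' : ℝ → ℝ} {ω a : ℝ}
    (hf : ∀ t ∈ Icc 0 a, HasDerivAt f (f' t) t)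
    (hf' : ∀ t ∈ Icc 0 a, HasDerivAt f' (-ω ^ 2 * f t) t) (h0 : f 0 = 1) (h0' : f' 0 = 0) :
    EqOn f (fun t => cos (ω * t)) (Icc 0 a) := by
  set L : ℝ × ℝ →L[ℝ] ℝ × ℝ :=
    (ContinuousLinearMap.snd ℝ ℝ ℝ).prod (-ω ^ 2 • ContinuousLinearMap.fst ℝ ℝ ℝ)
  have hsol : ∀ t ∈ Icc 0 a, HasDerivAt (fun t => (f t, f' t)) (L (f t, f' t)) t :=
    fun t ht => (hf t ht).prodMk (hf' t ht)
  have hcos (t : ℝ) : HasDerivAt (fun t => (cos (ω * t), -ω * sin (ω * t)))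
      (L (cos (ω * t), -ω * sin (ω * t))) t := by
    have hlin : HasDerivAt (fun t => ω * t) ω t := by simpa using (hasDerivAt_id t).const_mul ω
    refine (hlin.cos.prodMk (hlin.sin.const_mul (-ω))).congr_deriv ?_
    simp only [L, ContinuousLinearMap.prod_apply, ContinuousLinearMap.coe_snd',
      smul_apply, ContinuousLinearMap.coe_fst', smul_eq_mul, Prod.mk.injEq]
    constructor <;> ring
  have heq := ODE_solution_unique (fun _ => L.lipschitz)
    (fun t ht => (hsol t ht).continuousAt.continuousWithinAt)
    (fun t ht => (hsol t (Ico_subset_Icc_self ht)).hasDerivWithinAt)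
    (fun t _ => (hcos t).continuousAt.continuousWithinAt)
    (fun t _ => (hcos t).hasDerivWithinAt) (by simp [h0, h0'])
  exact fun t ht => congrArg Prod.fst (heq ht)

lemma sin_sq_lt_one_of_mem_Ioo {t : ℝ} (ht : t ∈ Ioo (-(π / 2)) (π / 2)) : sin t ^ 2 < 1 := by
  nlinarith [sin_sq_add_cos_sq t, cos_pos_of_mem_Ioo ht]

lemma ordinaryHypergeometric_eq_powerSeriesDeriv_zero (a b c : ℝ) :
    ₂F₁ a b c = powerSeriesDeriv (ordinaryHypergeometricCoefficient a b c) 0 := by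
  ext u
  rw [powerSeriesDeriv_zero, ordinaryHypergeometric_eq_tsum]
  simp only [smul_eq_mul]

lemma ordinaryHypergeometric_sin_sq {δ θ : ℝ} (hδ : δ ^ 2 ≤ 1 / 2) (hθ : θ ∈ Ico 0 (π / 2)) :
    ₂F₁ δ (-δ) (1 / 2) (sin θ ^ 2) = cos (2 * δ * θ) := by
  set c := ordinaryHypergeometricCoefficient δ (-δ) (1 / 2)
  have hc := abs_ordinaryHypergeometricCoefficient_le_one hδ
  have hu (t : ℝ) (ht : t ∈ Icc 0 θ) : |sin t ^ 2| < 1 := by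
    rw [abs_of_nonneg (sq_nonneg _)]
    exact sin_sq_lt_one_of_mem_Ioo ⟨by linarith [ht.1, pi_pos], ht.2.trans_lt hθ.2⟩
  have hsin_sq (t : ℝ) : HasDerivAt (fun t => sin t ^ 2) (sin (2 * t)) t := by
    refine ((hasDerivAt_sin t).pow 2).congr_deriv ?_
    rw [sin_two_mul]
    ring
  refine eqOn_cos_of_hasDerivAt (f := fun t => ₂F₁ δ (-δ) (1 / 2) (sin t ^ 2))
    (f' := fun t => powerSeriesDeriv c 1 (sin t ^ 2) * sin (2 * t))
    (fun t ht => ?_) (fun t ht => ?_) (by simp) (by simp) ⟨hθ.1, le_rfl⟩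
  · rw [ordinaryHypergeometric_eq_powerSeriesDeriv_zero]
    exact (hasDerivAt_powerSeriesDeriv hc (hu t ht) 0).comp t (hsin_sq t)
  · have hode := powerSeriesDeriv_hypergeometric_ode hc
      (fun k => ordinaryHypergeometricCoefficient_succ_mul _ _ _ k (by positivity)) (hu t ht)
    have hsin2 : HasDerivAt (fun t => sin (2 * t)) (2 * cos (2 * t)) t := by
      simpa [mul_comm] using ((hasDerivAt_id t).const_mul 2).sin
    refine (((hasDerivAt_powerSeriesDeriv hc (hu t ht) 1).comp t (hsin_sq t)).mul
      hsin2).congr_deriv ?_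
    rw [Function.comp_apply, ordinaryHypergeometric_eq_powerSeriesDeriv_zero, sin_two_mul,
      cos_two_mul]
    linear_combination 4 * hode + (4 * sin t ^ 2 * powerSeriesDeriv c 2 (sin t ^ 2)
      + 4 * powerSeriesDeriv c 1 (sin t ^ 2)) * cos_sq' t

noncomputable def sinCosIntegral (m n : ℕ) : ℝ := ∫ x in 0..π / 2, sin x ^ m * cos x ^ n

lemma sinCosIntegral_comm (m n : ℕ) : sinCosIntegral m n = sinCosIntegral n m := by
  have h := intervalIntegral.integral_comp_sub_left
    (fun x => sin x ^ m * cos x ^ n) (a := 0) (b := π / 2) (π / 2)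
  simp only [sub_zero, sub_self, sin_pi_div_two_sub, cos_pi_div_two_sub] at h
  rw [sinCosIntegral, sinCosIntegral, ← h]
  simp only [mul_comm]

lemma sinCosIntegral_add_two_left (m n : ℕ) :
    (m + n + 2) * sinCosIntegral (m + 2) n = (m + 1) * sinCosIntegral m n := by
  have hderiv (x : ℝ) : HasDerivAt (fun x => sin x ^ (m + 1) * cos x ^ (n + 1))
      ((m + 1) * (sin x ^ m * cos x ^ n) - (m + n + 2) * (sin x ^ (m + 2) * cos x ^ n)) x := by
    refine (((hasDerivAt_sin x).fun_pow (m + 1)).fun_mul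
      ((hasDerivAt_cos x).fun_pow (n + 1))).congr_deriv ?_
    simp only [add_tsub_cancel_right, Nat.cast_add, Nat.cast_one]
    linear_combination (m + 1) * sin x ^ m * cos x ^ n * cos_sq' x
  have hint := intervalIntegral.integral_eq_sub_of_hasDerivAt (a := 0) (b := π / 2)
    (fun x _ => hderiv x)
    (Continuous.intervalIntegrable (by fun_prop) _ _)
  rw [intervalIntegral.integral_sub (Continuous.intervalIntegrable (by fun_prop) _ _)
    (Continuous.intervalIntegrable (by fun_prop) _ _), intervalIntegral.integral_const_mul,
    intervalIntegral.integral_const_mul] at hint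
  simp only [sin_pi_div_two, one_pow, cos_pi_div_two, ne_eq, Nat.add_eq_zero_iff, one_ne_zero,
    and_false, not_false_eq_true, zero_pow, mul_zero, sin_zero, cos_zero, mul_one, sub_self] at hint
  rw [sinCosIntegral, sinCosIntegral]
  linarith

lemma sinCosIntegral_two_mul_succ (i j : ℕ) :
    sinCosIntegral (2 * (i + 1)) (2 * j) =
      (1 / 2 + i) / (i + j + 1) * sinCosIntegral (2 * i) (2 * j) := by
  have h := sinCosIntegral_add_two_left (2 * i) (2 * j)
  push_cast at h
  rw [div_mul_eq_mul_div, eq_div_iff (by positivity), show 2 * (i + 1) = 2 * i + 2 by ring]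
  linarith

lemma sinCosIntegral_two_mul (i j : ℕ) :
    sinCosIntegral (2 * i) (2 * j) =
      π / 2 * (ascPochhammer ℝ i).eval (1 / 2) * (ascPochhammer ℝ j).eval (1 / 2) / (i + j)! := by
  have hstep (i j : ℕ) (ih : sinCosIntegral (2 * i) (2 * j) =
      π / 2 * (ascPochhammer ℝ i).eval (1 / 2) * (ascPochhammer ℝ j).eval (1 / 2) / (i + j)!) :
      sinCosIntegral (2 * (i + 1)) (2 * j) =
      π / 2 * (ascPochhammer ℝ (i + 1)).eval (1 / 2) * (ascPochhammer ℝ j).eval (1 / 2) /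
        (i + 1 + j)! := by
    rw [sinCosIntegral_two_mul_succ, ih, ascPochhammer_succ_eval, Nat.add_right_comm i 1 j,
      Nat.factorial_succ, Nat.cast_mul]
    push_cast
    field_simp
  have hzero (j : ℕ) : sinCosIntegral (2 * j) 0 =
      π / 2 * (ascPochhammer ℝ j).eval (1 / 2) / j ! := by
    induction j with
    | zero => simp [sinCosIntegral]
    | succ j ih => simpa using hstep j 0 (by simpa using ih)
  induction i with
  | zero => simpa [sinCosIntegral_comm 0] using hzero j
  | succ i ih => exact hstep i j ih

lemma integral_cos_mul_mul_cos_mul_sub {ω : ℝ} (hω : ω ≠ 0) (a : ℝ) :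
    ∫ t in 0..a, cos (ω * t) * cos (ω * (a - t)) = (a * cos (ω * a) + sin (ω * a) / ω) / 2 := by
  have hderiv (t : ℝ) : HasDerivAt
      (fun t => (t * cos (ω * a) + sin (ω * (2 * t - a)) / (2 * ω)) / 2)
      (cos (ω * t) * cos (ω * (a - t))) t := by
    have hlin : HasDerivAt (fun t => ω * (2 * t - a)) (ω * 2) t := by
      simpa using (((hasDerivAt_id t).const_mul 2).sub_const a).const_mul ω
    refine ((((hasDerivAt_id t).mul_const (cos (ω * a))).add
      (hlin.sin.div_const (2 * ω))).div_const 2).congr_deriv ?_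
    rw [show ω * a = ω * t + ω * (a - t) by ring,
      show ω * (2 * t - a) = ω * t - ω * (a - t) by ring, cos_add, cos_sub]
    field_simp
    ring
  rw [intervalIntegral.integral_eq_sub_of_hasDerivAt (fun t _ => hderiv t)
    (Continuous.intervalIntegrable (by fun_prop) _ _)]
  rw [show ω * (2 * a - a) = ω * a by ring, show ω * (2 * 0 - a) = -(ω * a) by ring, sin_neg]
  field_simp
  ring

noncomputable def doubleSeriesTerm (δ : ℝ) (p : ℕ × ℕ) : ℝ :=
  (ascPochhammer ℝ p.1).eval δ * (ascPochhammer ℝ p.1).eval (-δ)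
    * (ascPochhammer ℝ p.2).eval δ * (ascPochhammer ℝ p.2).eval (-δ)
    / ((Nat.factorial p.1) * (Nat.factorial p.2) * (Nat.factorial (p.1 + p.2)))

lemma summable_abs_doubleSeriesTerm {δ : ℝ} (hδ : δ ^ 2 ≤ 2) :
    Summable fun p => |doubleSeriesTerm δ p| := by
  set A : ℕ → ℝ := fun k => (ascPochhammer ℝ k).eval δ * (ascPochhammer ℝ k).eval (-δ)
  have h : Summable fun k => |A k| / (k ! : ℝ) ^ 2 :=
    summable_abs_ascPochhammer_eval_mul_eval_neg_div_sq hδ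
  refine (h.mul_of_nonneg h (fun _ => by positivity) (fun _ => by positivity)).of_nonneg_of_le
    (fun _ => abs_nonneg _) fun ⟨i, j⟩ => ?_
  have hfac : (i ! * j ! : ℝ) ≤ (i + j)! := by
    exact_mod_cast Nat.le_of_dvd (Nat.factorial_pos _)
      (Nat.factorial_mul_factorial_dvd_factorial_add i j)
  have hterm : doubleSeriesTerm δ (i, j) = A i * A j / (i ! * j ! * (i + j)!) := by
    simp only [doubleSeriesTerm, A]
    ring
  rw [hterm, abs_div, abs_mul, abs_of_pos (by positivity : (0 : ℝ) < i ! * j ! * (i + j)!),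
    div_mul_div_comm]
  refine div_le_div_of_nonneg_left (by positivity) (by positivity) ?_
  calc (i ! : ℝ) ^ 2 * j ! ^ 2 = i ! * j ! * (i ! * j !) := by ring
    _ ≤ i ! * j ! * (i + j)! := by gcongr

noncomputable def sinCosSeriesTerm (δ : ℝ) (p : ℕ × ℕ) (θ : ℝ) : ℝ :=
  ordinaryHypergeometricCoefficient δ (-δ) (1 / 2) p.1 *
    ordinaryHypergeometricCoefficient δ (-δ) (1 / 2) p.2 * (sin θ ^ (2 * p.1) * cos θ ^ (2 * p.2))

lemma integral_sinCosSeriesTerm (δ : ℝ) (p : ℕ × ℕ) :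
    ∫ θ in 0..π / 2, sinCosSeriesTerm δ p θ = π / 2 * doubleSeriesTerm δ p := by
  have hpos (k : ℕ) : (ascPochhammer ℝ k).eval (1 / 2 : ℝ) ≠ 0 :=
    (ascPochhammer_pos k _ (by norm_num)).ne'
  simp only [sinCosSeriesTerm, intervalIntegral.integral_const_mul]
  rw [← sinCosIntegral, sinCosIntegral_two_mul, doubleSeriesTerm]
  have := hpos p.1; have := hpos p.2
  field_simp

lemma integral_norm_sinCosSeriesTerm (δ : ℝ) (p : ℕ × ℕ) :
    ∫ θ in 0..π / 2, ‖sinCosSeriesTerm δ p θ‖ = π / 2 * |doubleSeriesTerm δ p| := by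
  have hnonneg (θ : ℝ) : 0 ≤ sin θ ^ (2 * p.1) * cos θ ^ (2 * p.2) := by
    simp only [pow_mul]; positivity
  have hnorm (θ : ℝ) : ‖sinCosSeriesTerm δ p θ‖ =
      |ordinaryHypergeometricCoefficient δ (-δ) (1 / 2) p.1 *
        ordinaryHypergeometricCoefficient δ (-δ) (1 / 2) p.2| *
        (sin θ ^ (2 * p.1) * cos θ ^ (2 * p.2)) := by
    rw [sinCosSeriesTerm, Real.norm_eq_abs, abs_mul, abs_of_nonneg (hnonneg θ)]
  have hW : 0 ≤ ∫ θ in 0..π / 2, sin θ ^ (2 * p.1) * cos θ ^ (2 * p.2) :=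
    intervalIntegral.integral_nonneg (by positivity) fun θ _ => hnonneg θ
  calc ∫ θ in 0..π / 2, ‖sinCosSeriesTerm δ p θ‖
      = |ordinaryHypergeometricCoefficient δ (-δ) (1 / 2) p.1 *
          ordinaryHypergeometricCoefficient δ (-δ) (1 / 2) p.2| *
          ∫ θ in 0..π / 2, sin θ ^ (2 * p.1) * cos θ ^ (2 * p.2) := by
        simp only [hnorm, intervalIntegral.integral_const_mul]
    _ = |∫ θ in 0..π / 2, sinCosSeriesTerm δ p θ| := by
        simp only [sinCosSeriesTerm]
        rw [intervalIntegral.integral_const_mul, abs_mul _ (∫ _ in _.._, _), abs_of_nonneg hW]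
    _ = π / 2 * |doubleSeriesTerm δ p| := by
        rw [integral_sinCosSeriesTerm, abs_mul, abs_of_pos (by positivity)]

lemma tsum_sinCosSeriesTerm {δ θ : ℝ} (hδ : δ ^ 2 ≤ 1 / 2) (hθ : θ ∈ Ioo 0 (π / 2)) :
    ∑' p, sinCosSeriesTerm δ p θ = cos (2 * δ * θ) * cos (2 * δ * (π / 2 - θ)) := by
  have hc := abs_ordinaryHypergeometricCoefficient_le_one hδ
  have hsummable {u : ℝ} (hu : |u| < 1) :
      Summable fun k => ‖ordinaryHypergeometricCoefficient δ (-δ) (1 / 2) k * u ^ k‖ := by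
    simpa using summable_norm_mul_descFactorial_mul_pow hc hu 0
  have hsin : |sin θ ^ 2| < 1 := by
    rw [abs_of_nonneg (sq_nonneg _)]
    exact sin_sq_lt_one_of_mem_Ioo ⟨by linarith [hθ.1, pi_pos], hθ.2⟩
  have hcos : |sin (π / 2 - θ) ^ 2| < 1 := by
    rw [abs_of_nonneg (sq_nonneg _)]
    exact sin_sq_lt_one_of_mem_Ioo ⟨by linarith [hθ.2, pi_pos], by linarith [hθ.1]⟩
  rw [← ordinaryHypergeometric_sin_sq hδ ⟨hθ.1.le, hθ.2⟩,
    ← ordinaryHypergeometric_sin_sq hδ ⟨by linarith [hθ.2], by linarith [hθ.1]⟩,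
    ordinaryHypergeometric_eq_powerSeriesDeriv_zero, powerSeriesDeriv_zero, powerSeriesDeriv_zero,
    tsum_mul_tsum_of_summable_norm (hsummable hsin) (hsummable hcos)]
  refine tsum_congr fun p => ?_
  rw [sinCosSeriesTerm, sin_pi_div_two_sub, pow_mul, pow_mul]
  ring

theorem double_series_evaluation
    (delta : ℝ) (hd : 0 < delta) (hd' : delta < 1/2) :
    ∑' p : ℕ × ℕ,
        (ascPochhammer ℝ p.1).eval delta * (ascPochhammer ℝ p.1).eval (-delta)
        * (ascPochhammer ℝ p.2).eval delta * (ascPochhammer ℝ p.2).eval (-delta)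
        / ((Nat.factorial p.1) * (Nat.factorial p.2) * (Nat.factorial (p.1 + p.2)))
      = 1 / Real.pi * (Real.pi / 2 * Real.cos (Real.pi * delta)
          + 1 / (2 * delta) * Real.sin (Real.pi * delta)) := by
  have hδ : delta ^ 2 ≤ 1 / 2 := by nlinarith
  have hIoo (f : ℝ → ℝ) : ∫ θ in 0..π / 2, f θ = ∫ θ in Ioo 0 (π / 2), f θ := by
    rw [intervalIntegral.integral_of_le (by positivity), integral_Ioc_eq_integral_Ioo]
  have hint (p : ℕ × ℕ) :
      Integrable (sinCosSeriesTerm delta p) (volume.restrict (Ioo 0 (π / 2))) :=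
    (Continuous.integrableOn_Icc (by unfold sinCosSeriesTerm; fun_prop)).mono_set
      Ioo_subset_Icc_self
  have hsum : Summable fun p => ∫ θ in Ioo 0 (π / 2), ‖sinCosSeriesTerm delta p θ‖ := by
    simpa only [← hIoo, integral_norm_sinCosSeriesTerm] using
      (summable_abs_doubleSeriesTerm (by linarith)).mul_left (π / 2)
  calc ∑' p, doubleSeriesTerm delta p
      = ∑' p, 2 / π * ∫ θ in Ioo 0 (π / 2), sinCosSeriesTerm delta p θ := by
        refine tsum_congr fun p => ?_
        rw [← hIoo, integral_sinCosSeriesTerm]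
        field_simp
    _ = 2 / π * ∫ θ in Ioo 0 (π / 2), cos (2 * delta * θ) * cos (2 * delta * (π / 2 - θ)) := by
        rw [tsum_mul_left, integral_tsum_of_summable_integral_norm hint hsum,
          setIntegral_congr_fun measurableSet_Ioo fun θ hθ => tsum_sinCosSeriesTerm hδ hθ]
    _ = _ := by
        rw [← hIoo, integral_cos_mul_mul_cos_mul_sub (by positivity),
          show 2 * delta * (π / 2) = π * delta by ring]
        field_simp
end
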